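/- arXiv:1509.01863 — 3 statements merged into one kernel-verified Lean document; each statement's English description precedes it below -/
import Mathlib

section
/- For every integer ℓ ≥ 1, the number of partitions of 6ℓ−3 into at most 3 parts each of size at most 4ℓ−2 equals the number of partitions of 6ℓ−4 into at most 3 parts each of size at most 4ℓ−2. -/
/-!
Padding a partition with zeros to exactly three parts and listing the parts in decreasing order
identifies the partitions counted by `boxPartitions k 3 n` with the triples `a ≥ b ≥ c ≥ 0` with
`a + b + c = n` and `a ≤ k`. For `k = 4m + 2`, lowering the largest part by one sends the triples
for `n = 6m + 3` to those for `6m + 2`, except that it is undefined exactly on the triples with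
`a = b` and misses exactly those with `a = k`. Both exceptional families are indexed by
`0 ≤ i ≤ m`, as `(3m + 1 - i, 3m + 1 - i, 2i + 1)` and `(4m + 2, 2m - i, i)`, and matching them
completes the bijection.
-/

/-- `boxPartitions k j n` : the number of partitions of `n` into at most `j` parts,
with each part at most `k`. -/
noncomputable def boxPartitions (k j n : ℕ) : ℕ :=
  Nat.card {π : n.Partition // Multiset.card π.parts ≤ j ∧ ∀ i ∈ π.parts, i ≤ k}

namespace Multiset

variable {α : Type*} [LinearOrder α]

theorem sort_ge_triple {a b c : α} (hcb : c ≤ b) (hba : b ≤ a) :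
    ({a, b, c} : Multiset α).sort (· ≥ ·) = [a, b, c] := by
  rw [insert_eq_cons, sort_cons a _ _ (by simp [hba, hcb.trans hba]), insert_eq_cons,
    sort_cons b _ _ (by simpa using hcb), sort_singleton]

theorem exists_sorted_triple_of_card_eq_three {s : Multiset α} (hs : card s = 3) :
    ∃ a b c, c ≤ b ∧ b ≤ a ∧ s = {a, b, c} := by
  have hlen : (s.sort (· ≥ ·)).length = 3 := by rw [length_sort, hs]
  obtain ⟨a, b, c, habc⟩ := List.length_eq_three.mp hlen
  have hsorted := pairwise_sort s (· ≥ ·)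
  rw [habc] at hsorted
  refine ⟨a, b, c, by simp_all, by simp_all, ?_⟩
  rw [← sort_eq s (· ≥ ·), habc]
  rfl

end Multiset

open Multiset

namespace Nat.Partition

def padEquiv (k j n : ℕ) :
    {π : n.Partition // card π.parts ≤ j ∧ ∀ i ∈ π.parts, i ≤ k} ≃
      {s : Multiset ℕ // card s = j ∧ s.sum = n ∧ ∀ i ∈ s, i ≤ k} where
  toFun π := ⟨π.1.parts + replicate (j - card π.1.parts) 0, by simp; omega,
    by simp [π.1.parts_sum], by
      simp only [mem_add, mem_replicate]
      rintro i (hi | ⟨-, rfl⟩)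
      exacts [π.2.2 i hi, k.zero_le]⟩
  invFun s := ⟨ofSums n s.1 s.2.2.1, (card_le_card (filter_le _ _)).trans s.2.1.le,
    fun i hi => s.2.2.2 i (mem_of_mem_filter hi)⟩
  left_inv π := by
    ext1; ext1
    rw [ofSums_parts, filter_add, filter_eq_self.2 fun i hi => (π.1.parts_pos hi).ne',
      filter_eq_nil.2 fun i hi => not_not.2 (eq_of_mem_replicate hi), add_zero]
  right_inv s := by
    obtain ⟨s, hcard, -, -⟩ := s
    ext1
    show filter (· ≠ 0) s + replicate (j - card (filter (· ≠ 0) s)) 0 = s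
    conv_rhs => rw [← filter_add_not (· ≠ 0) s]
    congr 1
    refine (eq_replicate.2 ⟨?_, fun i hi => by simpa using of_mem_filter hi⟩).symm
    have := card_add (filter (· ≠ 0) s) (filter (fun i => ¬i ≠ 0) s)
    rw [filter_add_not] at this
    omega

end Nat.Partition

def boxTriples (k n : ℕ) : Set (ℕ × ℕ × ℕ) :=
  {t | t.2.2 ≤ t.2.1 ∧ t.2.1 ≤ t.1 ∧ t.1 + t.2.1 + t.2.2 = n ∧ t.1 ≤ k}

@[simp]
theorem mem_boxTriples {k n a b c : ℕ} :
    (a, b, c) ∈ boxTriples k n ↔ c ≤ b ∧ b ≤ a ∧ a + b + c = n ∧ a ≤ k :=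
  Iff.rfl

theorem boxPartitions_three (k n : ℕ) : boxPartitions k 3 n = Nat.card (boxTriples k n) := by
  rw [boxPartitions, Nat.card_congr (Nat.Partition.padEquiv k 3 n)]
  symm
  refine Nat.card_eq_of_bijective
    (fun t => ⟨{t.1.1, t.1.2.1, t.1.2.2}, by simp, ?_, ?_⟩) ⟨?_, ?_⟩
  · obtain ⟨⟨a, b, c⟩, ht⟩ := t
    simp only [mem_boxTriples] at ht
    simp [← ht.2.2.1, add_assoc]
  · obtain ⟨⟨a, b, c⟩, ht⟩ := t
    simp only [mem_boxTriples] at ht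
    simp only [insert_eq_cons, mem_cons, mem_singleton]
    omega
  · rintro ⟨⟨a, b, c⟩, ht⟩ ⟨⟨a', b', c'⟩, ht'⟩ heq
    simp only [mem_boxTriples] at ht ht'
    have := congrArg (fun s : Multiset ℕ => s.sort (· ≥ ·)) (congrArg Subtype.val heq)
    simp only [sort_ge_triple ht.1 ht.2.1, sort_ge_triple ht'.1 ht'.2.1, List.cons.injEq] at this
    simp [this]
  · rintro ⟨s, hcard, hsum, hk⟩
    obtain ⟨a, b, c, hcb, hba, rfl⟩ := exists_sorted_triple_of_card_eq_three hcard
    exact ⟨⟨(a, b, c), hcb, hba, by simpa [add_assoc] using hsum, hk a (by simp)⟩, rfl⟩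

def lowerTop (m : ℕ) : ℕ × ℕ × ℕ → ℕ × ℕ × ℕ
  | (a, b, c) => if b < a then (a - 1, b, c) else (4 * m + 2, 2 * m - c / 2, c / 2)

def raiseTop (m : ℕ) : ℕ × ℕ × ℕ → ℕ × ℕ × ℕ
  | (a, b, c) => if a < 4 * m + 2 then (a + 1, b, c) else (3 * m + 1 - c, 3 * m + 1 - c, 2 * c + 1)

theorem bijOn_lowerTop (m : ℕ) :
    Set.BijOn (lowerTop m) (boxTriples (4 * m + 2) (6 * m + 3))
      (boxTriples (4 * m + 2) (6 * m + 2)) := by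
  refine Set.InvOn.bijOn (f' := raiseTop m) ⟨?_, ?_⟩ ?_ ?_ <;>
    rintro ⟨a, b, c⟩ ht <;>
    simp only [mem_boxTriples] at ht <;>
    simp only [lowerTop, raiseTop] <;>
    split_ifs <;> simp only [mem_boxTriples, Prod.mk.injEq, and_true] <;> omega

theorem stmt_0 (ℓ : ℕ) (hℓ : 1 ≤ ℓ) :
    boxPartitions (4 * ℓ - 2) 3 (6 * ℓ - 3) = boxPartitions (4 * ℓ - 2) 3 (6 * ℓ - 4) := by
  obtain ⟨m, rfl⟩ : ∃ m, ℓ = m + 1 := ⟨ℓ - 1, by omega⟩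
  rw [show 4 * (m + 1) - 2 = 4 * m + 2 by omega, show 6 * (m + 1) - 3 = 6 * m + 3 by omega,
    show 6 * (m + 1) - 4 = 6 * m + 2 by omega, boxPartitions_three, boxPartitions_three]
  exact Nat.card_congr (bijOn_lowerTop m).equiv
end

section
/- For k ≡ 0 mod 4, the coefficient of q^{3k/2} in the Gaussian binomial coefficient [k+3 choose k]_q minus the coefficient of q^{3k/2−1} in the same polynomial equals 1. -/
open Polynomial

/-- The Gaussian binomial coefficient `[a choose b]_q`, a polynomial in `q`, defined via
the q-Pascal rule `[a+1 choose b+1]_q = [a choose b]_q + q^{b+1} [a choose b+1]_q`. -/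
noncomputable def gaussBinomial : ℕ → ℕ → Polynomial ℕ
  | _, 0 => 1
  | 0, _ + 1 => 0
  | a + 1, b + 1 => gaussBinomial a b + X ^ (b + 1) * gaussBinomial a (b + 1)

lemma gauss_zero_right (a : ℕ) : gaussBinomial a 0 = 1 := by
  cases a <;> rfl

lemma gauss_rec (a b : ℕ) :
    gaussBinomial (a + 1) (b + 1)
      = gaussBinomial a b + X ^ (b + 1) * gaussBinomial a (b + 1) := rfl

lemma gauss_eq_zero : ∀ {a b : ℕ}, a < b → gaussBinomial a b = 0 := by
  intro a
  induction a with
  | zero =>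
    intro b h
    match b, h with
    | b + 1, _ => rfl
  | succ a ih =>
    intro b h
    match b, h with
    | b + 1, h =>
      rw [gauss_rec, ih (by omega), ih (by omega), mul_zero, add_zero]

lemma gauss_self (a : ℕ) : gaussBinomial a a = 1 := by
  induction a with
  | zero => rfl
  | succ a ih =>
    rw [gauss_rec, gauss_eq_zero (show a < a + 1 by omega), mul_zero, add_zero, ih]

lemma coeff_g1 (k n : ℕ) : (gaussBinomial (k + 1) k).coeff n = if n ≤ k then 1 else 0 := by
  induction k with
  | zero =>
    rw [gauss_zero_right, coeff_one]
    split_ifs <;> omega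
  | succ k ih =>
    rw [gauss_rec, gauss_self, mul_one, coeff_add, ih, coeff_X_pow]
    split_ifs <;> omega

/-- Number of partitions of `n` into at most 2 parts, each at most `k`. -/
def f2 (k n : ℕ) : ℕ := if n ≤ 2 * k then (min n (2 * k - n)) / 2 + 1 else 0

lemma coeff_Xpow_mul (d n : ℕ) (p : Polynomial ℕ) :
    (X ^ d * p).coeff n = if d ≤ n then p.coeff (n - d) else 0 := by
  rw [X_pow_mul, coeff_mul_X_pow']

lemma coeff_g2 (k : ℕ) : ∀ n, (gaussBinomial (k + 2) k).coeff n = f2 k n := by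
  induction k with
  | zero =>
    intro n
    rw [gauss_zero_right, coeff_one]
    simp only [f2]
    split_ifs <;> omega
  | succ k ih =>
    intro n
    rw [show k + 1 + 2 = k + 2 + 1 by omega, gauss_rec, coeff_add, ih, coeff_Xpow_mul]
    have hg : gaussBinomial (k + 2) (k + 1) = gaussBinomial (k + 1 + 1) (k + 1) := by
      rw [show k + 2 = k + 1 + 1 by omega]
    rw [hg, coeff_g1]
    simp only [f2]
    split_ifs <;> omega

lemma gauss_natDegree_le (a : ℕ) : ∀ b, (gaussBinomial a b).natDegree ≤ b * (a - b) := by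
  induction a with
  | zero =>
    intro b
    cases b with
    | zero => simp [gauss_zero_right]
    | succ b => rw [gauss_eq_zero (by omega)]; simp
  | succ a ih =>
    intro b
    cases b with
    | zero => simp [gauss_zero_right]
    | succ b =>
      rw [gauss_rec]
      refine (natDegree_add_le _ _).trans (max_le ?_ ?_)
      · exact (ih b).trans (Nat.mul_le_mul (by omega) (by omega))
      · rcases le_or_gt (b + 1) a with hba | hba
        · refine natDegree_mul_le.trans ?_
          have h1 : (X ^ (b + 1) : Polynomial ℕ).natDegree ≤ b + 1 := natDegree_X_pow_le _
          have h2 := ih (b + 1)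
          have e : (b + 1) + (b + 1) * (a - (b + 1)) = (b + 1) * (a + 1 - (b + 1)) := by
            rw [show a + 1 - (b + 1) = (a - (b + 1)) + 1 by omega]
            ring
          rw [← e]
          exact add_le_add h1 h2
        · rw [gauss_eq_zero hba, mul_zero]
          simp

lemma coeff_g3_zero (j n : ℕ) (h : 3 * j < n) : (gaussBinomial (j + 3) j).coeff n = 0 := by
  apply coeff_eq_zero_of_natDegree_lt
  have h1 := gauss_natDegree_le (j + 3) j
  have e : j * (j + 3 - j) = 3 * j := by
    rw [show j + 3 - j = 3 by omega]; ring
  omega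

lemma c3rec (j n : ℕ) :
    (gaussBinomial (j + 4) (j + 1)).coeff n
      = (gaussBinomial (j + 3) j).coeff n
        + if j + 1 ≤ n then f2 (j + 1) (n - (j + 1)) else 0 := by
  rw [show j + 4 = j + 3 + 1 by omega, gauss_rec, coeff_add, coeff_Xpow_mul]
  have hg : gaussBinomial (j + 3) (j + 1) = gaussBinomial (j + 1 + 2) (j + 1) := by
    rw [show j + 3 = j + 1 + 2 by omega]
  rw [hg]
  congr 1
  split_ifs with h
  · rw [coeff_g2]
  · rfl

/-- Closed form for the coefficient of `q^(6t)` in `[2t+s+3 choose 2t+s]_q`. -/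
def Fc (t s : ℕ) : ℕ :=
  if s ≤ t then (9 * (s * s) + 18 * s + 12) / 12
  else (36 * (t * t) + 36 * t + 12) / 12 - ((4 * t - s + 1) * (4 * t - s + 1)) / 4

/-- Closed form for the coefficient of `q^(6t-1)` in `[2t+s+3 choose 2t+s]_q`. -/
def Gc (t s : ℕ) : ℕ :=
  if s + 1 ≤ t then (9 * (s * s) + 24 * s + 19) / 12
  else (36 * (t * t) + 24 * t + 7) / 12 - ((4 * t - s) * (4 * t - s)) / 4

lemma sqdiff (x : ℕ) (hx : 1 ≤ x) : (x + 1) * (x + 1) / 4 = x * x / 4 + ((x - 1) / 2 + 1) := by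
  obtain ⟨c, rfl | rfl⟩ := Nat.even_or_odd' x
  · rw [show (2 * c + 1) * (2 * c + 1) = 4 * (c * c) + 4 * c + 1 by ring,
      show (2 * c) * (2 * c) = 4 * (c * c) by ring]
    generalize c * c = m
    omega
  · rw [show (2 * c + 1 + 1) * (2 * c + 1 + 1) = 4 * (c * c) + 8 * c + 4 by ring,
      show (2 * c + 1) * (2 * c + 1) = 4 * (c * c) + 4 * c + 1 by ring]
    generalize c * c = m
    omega

lemma AF (t s : ℕ) (ht : 1 ≤ t) (hs : s + 1 ≤ 2 * t) :
    Fc t (s + 1) = Fc t s + f2 (2 * t + s + 1) (4 * t - s - 1) := by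
  have hn : 4 * t - s - 1 ≤ 2 * (2 * t + s + 1) := by omega
  rcases lt_trichotomy s t with hst | hst | hst
  · simp only [Fc, f2]
    rw [if_pos (show s + 1 ≤ t by omega), if_pos (show s ≤ t by omega), if_pos hn,
      show 2 * (2 * t + s + 1) - (4 * t - s - 1) = 3 * s + 3 by omega,
      min_eq_right (show 3 * s + 3 ≤ 4 * t - s - 1 by omega)]
    obtain ⟨c, rfl | rfl⟩ := Nat.even_or_odd' s
    · rw [show (2 * c + 1) * (2 * c + 1) = 4 * (c * c) + 4 * c + 1 by ring,
        show (2 * c) * (2 * c) = 4 * (c * c) by ring]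
      generalize c * c = m
      omega
    · rw [show (2 * c + 1 + 1) * (2 * c + 1 + 1) = 4 * (c * c) + 8 * c + 4 by ring,
        show (2 * c + 1) * (2 * c + 1) = 4 * (c * c) + 4 * c + 1 by ring]
      generalize c * c = m
      omega
  · subst hst
    simp only [Fc, f2]
    rw [if_neg (show ¬ s + 1 ≤ s by omega), if_pos (le_refl s), if_pos hn,
      show 2 * (2 * s + s + 1) - (4 * s - s - 1) = 3 * s + 3 by omega,
      show 4 * s - s - 1 = 3 * s - 1 by omega,
      min_eq_left (show 3 * s - 1 ≤ 3 * s + 3 by omega),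
      show 4 * s - (s + 1) + 1 = 3 * s by omega]
    obtain ⟨c, rfl | rfl⟩ := Nat.even_or_odd' s
    · rw [show 3 * (2 * c) * (3 * (2 * c)) = 36 * (c * c) by ring,
        show (2 * c) * (2 * c) = 4 * (c * c) by ring]
      generalize c * c = m
      omega
    · rw [show 3 * (2 * c + 1) * (3 * (2 * c + 1)) = 36 * (c * c) + 36 * c + 9 by ring,
        show (2 * c + 1) * (2 * c + 1) = 4 * (c * c) + 4 * c + 1 by ring]
      generalize c * c = m
      omega
  · simp only [Fc, f2]
    rw [if_neg (show ¬ s + 1 ≤ t by omega), if_neg (show ¬ s ≤ t by omega), if_pos hn,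
      show 2 * (2 * t + s + 1) - (4 * t - s - 1) = 3 * s + 3 by omega]
    obtain ⟨x, hx⟩ : ∃ x, x = 4 * t - s - 1 := ⟨_, rfl⟩
    rw [show 4 * t - s - 1 = x by omega,
      min_eq_left (show x ≤ 3 * s + 3 by omega),
      show 4 * t - (s + 1) + 1 = x + 1 by omega,
      show 4 * t - s + 1 = x + 1 + 1 by omega]
    have h2 : (x + 1 + 1) * (x + 1 + 1) ≤ (3 * t + 1) * (3 * t + 1) :=
      Nat.mul_le_mul (by omega) (by omega)
    have h3 : (3 * t + 1) * (3 * t + 1) ≤ 4 * ((36 * (t * t) + 36 * t + 12) / 12) := by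
      rw [show (3 * t + 1) * (3 * t + 1) = 9 * (t * t) + 6 * t + 1 by ring]
      generalize t * t = m
      omega
    have h4 : (x + 1 + 1) * (x + 1 + 1) / 4 ≤ (36 * (t * t) + 36 * t + 12) / 12 := by
      have h5 := Nat.div_le_div_right (c := 4) (h2.trans h3)
      rwa [Nat.mul_div_cancel_left _ (by norm_num)] at h5
    rw [sqdiff (x + 1) (by omega)] at h4 ⊢
    revert h4
    generalize (x + 1) * (x + 1) = Q
    generalize t * t = m
    intro h4
    omega

lemma AG (t s : ℕ) (ht : 1 ≤ t) (hs : s + 1 ≤ 2 * t) :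
    Gc t (s + 1) = Gc t s + f2 (2 * t + s + 1) (4 * t - s - 2) := by
  have hn : 4 * t - s - 2 ≤ 2 * (2 * t + s + 1) := by omega
  rcases lt_trichotomy (s + 1) t with hst | hst | hst
  · simp only [Gc, f2]
    rw [if_pos (show s + 1 + 1 ≤ t by omega), if_pos (show s + 1 ≤ t by omega), if_pos hn,
      show 2 * (2 * t + s + 1) - (4 * t - s - 2) = 3 * s + 4 by omega,
      min_eq_right (show 3 * s + 4 ≤ 4 * t - s - 2 by omega)]
    obtain ⟨c, rfl | rfl⟩ := Nat.even_or_odd' s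
    · rw [show (2 * c + 1) * (2 * c + 1) = 4 * (c * c) + 4 * c + 1 by ring,
        show (2 * c) * (2 * c) = 4 * (c * c) by ring]
      generalize c * c = m
      omega
    · rw [show (2 * c + 1 + 1) * (2 * c + 1 + 1) = 4 * (c * c) + 8 * c + 4 by ring,
        show (2 * c + 1) * (2 * c + 1) = 4 * (c * c) + 4 * c + 1 by ring]
      generalize c * c = m
      omega
  · subst hst
    simp only [Gc, f2]
    rw [if_neg (show ¬ s + 1 + 1 ≤ s + 1 by omega), if_pos (le_refl (s + 1)), if_pos hn,
      show 2 * (2 * (s + 1) + s + 1) - (4 * (s + 1) - s - 2) = 3 * s + 4 by omega,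
      show 4 * (s + 1) - s - 2 = 3 * s + 2 by omega,
      min_eq_left (show 3 * s + 2 ≤ 3 * s + 4 by omega),
      show 4 * (s + 1) - (s + 1) = 3 * s + 3 by omega]
    obtain ⟨c, rfl | rfl⟩ := Nat.even_or_odd' s
    · rw [show (2 * c + 1) * (2 * c + 1) = 4 * (c * c) + 4 * c + 1 by ring,
        show (3 * (2 * c) + 3) * (3 * (2 * c) + 3) = 36 * (c * c) + 36 * c + 9 by ring,
        show (2 * c) * (2 * c) = 4 * (c * c) by ring]
      generalize c * c = m
      omega
    · rw [show (2 * c + 1 + 1) * (2 * c + 1 + 1) = 4 * (c * c) + 8 * c + 4 by ring,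
        show (3 * (2 * c + 1) + 3) * (3 * (2 * c + 1) + 3) = 36 * (c * c) + 72 * c + 36 by ring,
        show (2 * c + 1) * (2 * c + 1) = 4 * (c * c) + 4 * c + 1 by ring]
      generalize c * c = m
      omega
  · simp only [Gc, f2]
    rw [if_neg (show ¬ s + 1 + 1 ≤ t by omega), if_neg (show ¬ s + 1 ≤ t by omega), if_pos hn,
      show 2 * (2 * t + s + 1) - (4 * t - s - 2) = 3 * s + 4 by omega]
    obtain ⟨x, hx⟩ : ∃ x, x = 4 * t - s - 2 := ⟨_, rfl⟩
    rw [show 4 * t - s - 2 = x by omega,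
      min_eq_left (show x ≤ 3 * s + 4 by omega),
      show 4 * t - (s + 1) = x + 1 by omega,
      show 4 * t - s = x + 1 + 1 by omega]
    have h2 : (x + 1 + 1) * (x + 1 + 1) ≤ (3 * t) * (3 * t) :=
      Nat.mul_le_mul (by omega) (by omega)
    have h3 : (3 * t) * (3 * t) ≤ 4 * ((36 * (t * t) + 24 * t + 7) / 12) := by
      rw [show (3 * t) * (3 * t) = 9 * (t * t) by ring]
      generalize t * t = m
      omega
    have h4 : (x + 1 + 1) * (x + 1 + 1) / 4 ≤ (36 * (t * t) + 24 * t + 7) / 12 := by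
      have h5 := Nat.div_le_div_right (c := 4) (h2.trans h3)
      rwa [Nat.mul_div_cancel_left _ (by norm_num)] at h5
    rw [sqdiff (x + 1) (by omega)] at h4 ⊢
    revert h4
    generalize (x + 1) * (x + 1) = Q
    generalize t * t = m
    intro h4
    omega

lemma AD (t : ℕ) (ht : 1 ≤ t) : Fc t (2 * t) = Gc t (2 * t) + 1 := by
  simp only [Fc, Gc]
  rw [if_neg (show ¬ 2 * t ≤ t by omega), if_neg (show ¬ 2 * t + 1 ≤ t by omega),
    show 4 * t - 2 * t = 2 * t by omega,
    show (2 * t + 1) * (2 * t + 1) = 4 * (t * t) + 4 * t + 1 by ring,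
    show (2 * t) * (2 * t) = 4 * (t * t) by ring]
  generalize t * t = m
  omega

/-- For a positive integer `k ≡ 0 (mod 4)`, the coefficient of `q^{3k/2}` in
`[k+3 choose k]_q` minus the coefficient of `q^{3k/2-1}` equals `1`. -/
theorem stmt_3 (k : ℕ) (hk : 0 < k) (h4 : k % 4 = 0) :
    (gaussBinomial (k + 3) k).coeff (3 * k / 2)
      = (gaussBinomial (k + 3) k).coeff (3 * k / 2 - 1) + 1 := by
  obtain ⟨t, rfl⟩ : ∃ t, k = 4 * t := ⟨k / 4, by omega⟩
  have ht : 1 ≤ t := by omega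
  have key : ∀ s, s ≤ 2 * t →
      (gaussBinomial (2 * t + s + 3) (2 * t + s)).coeff (6 * t) = Fc t s ∧
      (gaussBinomial (2 * t + s + 3) (2 * t + s)).coeff (6 * t - 1) = Gc t s := by
    intro s
    induction s with
    | zero =>
      intro _
      rw [show 2 * t + 0 + 3 = (2 * t - 1) + 4 by omega, show 2 * t + 0 = (2 * t - 1) + 1 by omega]
      constructor
      · rw [c3rec, coeff_g3_zero _ _ (by omega), zero_add, if_pos (by omega)]
        simp only [f2, Fc]
        split_ifs <;> omega
      · rw [c3rec, coeff_g3_zero _ _ (by omega), zero_add, if_pos (by omega)]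
        simp only [f2, Gc]
        split_ifs <;> omega
    | succ s ih =>
      intro hs
      obtain ⟨ihD, ihE⟩ := ih (by omega)
      rw [show 2 * t + (s + 1) + 3 = (2 * t + s) + 4 by omega,
        show 2 * t + (s + 1) = (2 * t + s) + 1 by omega]
      constructor
      · rw [c3rec, ihD, if_pos (show 2 * t + s + 1 ≤ 6 * t by omega),
          show 6 * t - (2 * t + s + 1) = 4 * t - s - 1 by omega]
        exact (AF t s ht hs).symm
      · rw [c3rec, ihE, if_pos (show 2 * t + s + 1 ≤ 6 * t - 1 by omega),
          show 6 * t - 1 - (2 * t + s + 1) = 4 * t - s - 2 by omega]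
        exact (AG t s ht hs).symm
  obtain ⟨hD, hE⟩ := key (2 * t) le_rfl
  rw [show 3 * (4 * t) / 2 = 6 * t by omega,
    show 4 * t + 3 = 2 * t + 2 * t + 3 by omega,
    show 4 * t = 2 * t + 2 * t by omega,
    hD, hE]
  exact AD t ht
end

section
/- For all natural numbers j, k, n with n ≤ jk/2, we have p(k, j, n) ≥ p(k, j, n−1), where p(k, j, n) is the number of partitions of n into at most j parts each of size at most k (unimodality of Gaussian binomial coefficients up to the middle). -/
open Finset

lemma Finset.sum_filter_sub_one_mem {M : Type*} [AddCommMonoid M] (T : Finset ℕ)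
    {q : ℕ → M} (hq : q 0 = 0) :
    ∑ t ∈ T with t - 1 ∈ T, q t = ∑ u ∈ T with u + 1 ∈ T, q (u + 1) := by
  have hq' (t : ℕ) (ht : q t ≠ 0) : t - 1 + 1 = t :=
    Nat.sub_add_cancel <| Nat.one_le_iff_ne_zero.2 fun h => ht (h ▸ hq)
  refine sum_bij_ne_zero (fun t _ _ => t - 1) ?_ ?_ ?_ ?_
  · intro t ht ht'
    simp only [mem_filter, hq' t ht'] at ht ⊢
    exact ⟨ht.2, ht.1⟩
  · intro t₁ _ ht₁ t₂ _ ht₂ h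
    have := hq' t₁ ht₁
    have := hq' t₂ ht₂
    omega
  · intro u hu hu'
    simp only [mem_filter] at hu
    exact ⟨u + 1, by simpa using hu.symm, hu', by simp⟩
  · intro t _ ht
    rw [hq' t ht]

lemma Multiset.eq_of_card_eq_of_filter_ne_zero_eq {s s' : Multiset ℕ} (hc : card s = card s')
    (h : s.filter (· ≠ 0) = s'.filter (· ≠ 0)) : s = s' := by
  have hz (t : Multiset ℕ) : t.filter (¬ · ≠ 0) = replicate (t.filter (¬ · ≠ 0)).card 0 :=
    eq_replicate_card.2 fun b hb => by simpa using of_mem_filter hb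
  rw [← filter_add_not (· ≠ 0) s, ← filter_add_not (· ≠ 0) s', card_add, card_add, h] at hc
  rw [← filter_add_not (· ≠ 0) s, ← filter_add_not (· ≠ 0) s', h, hz s, hz s']
  congr 2
  omega

lemma Monotone.eq_of_ofFn_perm {α : Type*} [LinearOrder α] {j : ℕ} {b b' : Fin j → α}
    (hb : Monotone b) (hb' : Monotone b') (h : (List.ofFn b).Perm (List.ofFn b')) : b = b' :=
  List.ofFn_injective (h.eq_of_sortedLE hb.sortedLE_ofFn hb'.sortedLE_ofFn)

lemma Multiset.exists_monotone_ofFn_eq {α : Type*} [LinearOrder α] [Inhabited α]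
    {s : Multiset α} {j : ℕ} (hs : card s = j) :
    ∃ b : Fin j → α, Monotone b ∧ ↑(List.ofFn b) = s := by
  subst hs
  set l := s.sort (· ≤ ·)
  have hl : List.ofFn (fun i : Fin (card s) => l.getD i default) = l := by
    refine List.ext_getElem (by simp [l]) fun i h₁ h₂ => ?_
    simp [List.getElem?_eq_getElem h₂]
  refine ⟨_, ?_, by rw [hl, sort_eq]⟩
  rw [← List.sortedLE_ofFn_iff, hl, List.sortedLE_iff_pairwise]
  exact pairwise_sort s _

lemma Fin.add_sub_le_of_strictMono {j : ℕ} {c : Fin j → ℕ} (hc : StrictMono c) {i i' : Fin j}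
    (h : i ≤ i') : c i + (i' - i) ≤ c i' := by
  have hmaps : Set.MapsTo c (Icc i i') (Icc (c i) (c i')) := fun x hx => by
    simp only [coe_Icc, Set.mem_Icc] at hx ⊢
    exact ⟨hc.monotone hx.1, hc.monotone hx.2⟩
  have := card_le_card_of_injOn c hmaps hc.injective.injOn
  rw [Fin.card_Icc, Nat.card_Icc] at this
  have := hc.monotone h
  omega

lemma StrictMono.val_le_apply {j : ℕ} {c : Fin j → ℕ} (hc : StrictMono c) (i : Fin j) :
    (i : ℕ) ≤ c i := by
  have := Fin.add_sub_le_of_strictMono hc (Fin.le_def.2 (Nat.zero_le i) : ⟨0, i.pos⟩ ≤ i)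
  simp only at this
  omega

lemma StrictMono.monotone_sub_val {j : ℕ} {c : Fin j → ℕ} (hc : StrictMono c) :
    Monotone fun i => c i - i := fun i i' h => by
  show c i - i ≤ c i' - i'
  have := Fin.add_sub_le_of_strictMono hc h
  have : (i : ℕ) ≤ i' := h
  omega

lemma Monotone.strictMono_add_val {j : ℕ} {b : Fin j → ℕ} (hb : Monotone b) :
    StrictMono fun i => b i + i :=
  fun _ _ h => add_lt_add_of_le_of_lt (hb h.le) h

namespace IsSl2Triple.HasPrimitiveVectorWith

open LieModule Module

variable {R L M : Type*} [CommRing R] [LieRing L] [LieAlgebra R L] [AddCommGroup M] [Module R M]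
  [LieRingModule L M] [LieModule R L M] {h e f : L} {t : IsSl2Triple h e f} {m : M} {μ : R}

lemma exists_nat_of_pow_toEnd_f_eq_zero [IsDomain R] [CharZero R] [IsTorsionFree R M]
    (P : t.HasPrimitiveVectorWith m μ) {N : ℕ} (hN : (toEnd R L M f ^ N) m = 0) :
    ∃ n : ℕ, μ = n := by
  obtain ⟨n, hn₁, hn₂⟩ := Nat.exists_not_and_succ_of_not_zero_of_exists
    (p := fun n => (toEnd R L M f ^ n) m = 0) P.ne_zero ⟨N, hN⟩
  refine ⟨n, ?_⟩
  have := P.lie_e_pow_succ_toEnd_f n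
  rw [hn₂, lie_zero, eq_comm, smul_eq_zero_iff_left hn₁, mul_eq_zero, sub_eq_zero] at this
  exact this.resolve_left (Nat.cast_add_one_ne_zero n)

end IsSl2Triple.HasPrimitiveVectorWith

def sumSubsets (m j s : ℕ) : Finset (Finset ℕ) :=
  ((range m).powersetCard j).filter fun T => ∑ t ∈ T, t = s

lemma mem_sumSubsets {m j s : ℕ} {T : Finset ℕ} :
    T ∈ sumSubsets m j s ↔ T ⊆ range m ∧ #T = j ∧ ∑ t ∈ T, t = s := by
  simp [sumSubsets, mem_powersetCard, and_assoc]

namespace FinsetSl2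

def shiftUp (T : Finset ℕ) (t : ℕ) : Finset ℕ := insert (t + 1) (T.erase t)

def shiftDown (T : Finset ℕ) (t : ℕ) : Finset ℕ := insert (t - 1) (T.erase t)

def upSet (T : Finset ℕ) : Finset ℕ := T.filter (fun t => t + 1 ∉ T)

-- `0 ∈ T` never qualifies, because `0 - 1 = 0 ∈ T`.
def downSet (T : Finset ℕ) : Finset ℕ := T.filter (fun t => t - 1 ∉ T)

def weight (m : ℕ) (T : Finset ℕ) : ℚ := ∑ t ∈ T, (2 * (t : ℚ) + 1 - m)

noncomputable def opE (m : ℕ) : Module.End ℚ (Finset ℕ → ℚ) :=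
  LinearMap.pi fun T => ∑ t ∈ downSet T, ((m : ℚ) - t) • LinearMap.proj (shiftDown T t)

noncomputable def opF : Module.End ℚ (Finset ℕ → ℚ) :=
  LinearMap.pi fun T => ∑ u ∈ upSet T, ((u : ℚ) + 1) • LinearMap.proj (shiftUp T u)

noncomputable def opH (m : ℕ) : Module.End ℚ (Finset ℕ → ℚ) :=
  LinearMap.pi fun T => weight m T • LinearMap.proj T

lemma opE_apply (m : ℕ) (f : Finset ℕ → ℚ) (T : Finset ℕ) :
    opE m f T = ∑ t ∈ downSet T, ((m : ℚ) - t) * f (shiftDown T t) := by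
  simp [opE]

lemma opF_apply (f : Finset ℕ → ℚ) (T : Finset ℕ) :
    opF f T = ∑ u ∈ upSet T, ((u : ℚ) + 1) * f (shiftUp T u) := by
  simp [opF]

lemma opH_apply (m : ℕ) (f : Finset ℕ → ℚ) (T : Finset ℕ) : opH m f T = weight m T * f T := by
  simp [opH]

variable {T : Finset ℕ} {t u : ℕ}

lemma mem_upSet : u ∈ upSet T ↔ u ∈ T ∧ u + 1 ∉ T := mem_filter

lemma mem_downSet : t ∈ downSet T ↔ t ∈ T ∧ t - 1 ∉ T := mem_filter

lemma sub_one_add_one_of_mem_downSet (ht : t ∈ downSet T) : t - 1 + 1 = t := by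
  obtain ⟨htT, ht'⟩ := mem_downSet.1 ht
  have : t ≠ 0 := by rintro rfl; exact ht' htT
  omega

lemma shiftUp_shiftDown (ht : t ∈ downSet T) : shiftUp (shiftDown T t) (t - 1) = T := by
  obtain ⟨htT, ht'⟩ := mem_downSet.1 ht
  rw [shiftUp, shiftDown, erase_insert (by simp [ht']), sub_one_add_one_of_mem_downSet ht,
    insert_erase htT]

lemma sub_one_mem_upSet_shiftDown (ht : t ∈ downSet T) : t - 1 ∈ upSet (shiftDown T t) := by
  have := sub_one_add_one_of_mem_downSet ht
  simp only [mem_upSet, shiftDown, mem_insert, mem_erase, this, true_or, ne_eq, not_true,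
    false_and, or_false, true_and]
  omega

lemma shiftDown_shiftUp (hu : u ∈ upSet T) : shiftDown (shiftUp T u) (u + 1) = T := by
  obtain ⟨huT, hu'⟩ := mem_upSet.1 hu
  rw [shiftDown, shiftUp, erase_insert (by simp [hu']), Nat.add_sub_cancel, insert_erase huT]

lemma add_one_mem_downSet_shiftUp : u + 1 ∈ downSet (shiftUp T u) := by
  simp [mem_downSet, shiftUp]

lemma card_shiftUp (hu : u ∈ upSet T) : #(shiftUp T u) = #T := by
  obtain ⟨huT, hu'⟩ := mem_upSet.1 hu
  rw [shiftUp, card_insert_of_notMem (by simp [hu']), card_erase_add_one huT]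

lemma sum_shiftUp (hu : u ∈ upSet T) : ∑ x ∈ shiftUp T u, x = ∑ x ∈ T, x + 1 := by
  obtain ⟨huT, hu'⟩ := mem_upSet.1 hu
  rw [shiftUp, sum_insert (by simp [hu']), ← sum_erase_add _ _ huT]
  ring

lemma weight_shiftUp (m : ℕ) (hu : u ∈ upSet T) : weight m (shiftUp T u) = weight m T + 2 := by
  obtain ⟨huT, hu'⟩ := mem_upSet.1 hu
  rw [weight, shiftUp, sum_insert (by simp [hu']), weight, ← sum_erase_add _ _ huT]
  push_cast
  ring

lemma weight_shiftDown (m : ℕ) (ht : t ∈ downSet T) :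
    weight m (shiftDown T t) = weight m T - 2 := by
  rw [← shiftUp_shiftDown ht, weight_shiftUp m (sub_one_mem_upSet_shiftDown ht),
    shiftUp_shiftDown ht]
  ring

lemma mem_downSet_and_mem_upSet_shiftDown_iff :
    t ∈ downSet T ∧ u ∈ (upSet (shiftDown T t)).erase (t - 1) ↔
      t ∈ downSet T ∧ u ∈ upSet T ∧ u ≠ t ∧ u + 1 ≠ t - 1 := by
  simp only [mem_downSet, mem_erase, mem_upSet, shiftDown, mem_insert]
  grind

lemma mem_downSet_shiftUp_and_mem_upSet_iff :
    t ∈ (downSet (shiftUp T u)).erase (u + 1) ∧ u ∈ upSet T ↔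
      t ∈ downSet T ∧ u ∈ upSet T ∧ u ≠ t ∧ u + 1 ≠ t - 1 := by
  simp only [mem_downSet, mem_erase, mem_upSet, shiftUp, mem_insert]
  grind

lemma shiftUp_shiftDown_comm (ht : t ∈ downSet T) (hu : u ∈ upSet T) (h : u ≠ t) :
    shiftUp (shiftDown T t) u = shiftDown (shiftUp T u) t := by
  rw [mem_downSet] at ht
  rw [mem_upSet] at hu
  ext x
  simp only [shiftUp, shiftDown, mem_insert, mem_erase]
  grind

-- With `q t = t (m - t)`, `q t - q (t + 1) = 2t + 1 - m`; over a run of consecutive elements of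
-- `T` this telescopes to `q` at the start of the run minus `q` just past its end.
lemma sum_downSet_sub_sum_upSet (m : ℕ) (T : Finset ℕ) :
    ∑ t ∈ downSet T, (t : ℚ) * (m - t) - ∑ u ∈ upSet T, ((u : ℚ) + 1) * (m - (u + 1)) =
      weight m T := by
  set q : ℕ → ℚ := fun t => t * (m - t)
  have hup : ∑ u ∈ upSet T, ((u : ℚ) + 1) * (m - (u + 1)) = ∑ u ∈ upSet T, q (u + 1) := by
    simp [q]
  have hT : ∑ t ∈ T, q t = ∑ t ∈ downSet T, q t + ∑ t ∈ T with t - 1 ∈ T, q t := by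
    rw [downSet, add_comm, sum_filter_add_sum_filter_not]
  have hT' : ∑ u ∈ T, q (u + 1) = ∑ u ∈ upSet T, q (u + 1) + ∑ u ∈ T with u + 1 ∈ T, q (u + 1) := by
    rw [upSet, add_comm, sum_filter_add_sum_filter_not]
  have hinner := sum_filter_sub_one_mem T (q := q) (by simp [q])
  have htel : ∑ t ∈ T, q t - ∑ u ∈ T, q (u + 1) = weight m T := by
    rw [weight, ← sum_sub_distrib]
    refine sum_congr rfl fun t _ => ?_
    simp only [q]; push_cast; ring
  rw [hup]
  linarith

lemma opE_opF_apply (m : ℕ) (f : Finset ℕ → ℚ) (T : Finset ℕ) :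
    opE m (opF f) T = (∑ t ∈ downSet T, (t : ℚ) * (m - t)) * f T +
      ∑ t ∈ downSet T, ∑ u ∈ (upSet (shiftDown T t)).erase (t - 1),
        ((m : ℚ) - t) * ((u + 1) * f (shiftUp (shiftDown T t) u)) := by
  rw [opE_apply, sum_mul, ← sum_add_distrib]
  refine sum_congr rfl fun t ht => ?_
  have : ((t - 1 : ℕ) : ℚ) + 1 = t := by exact_mod_cast sub_one_add_one_of_mem_downSet ht
  rw [opF_apply, ← add_sum_erase _ _ (sub_one_mem_upSet_shiftDown ht), shiftUp_shiftDown ht,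
    mul_add, mul_sum, this]
  ring

lemma opF_opE_apply (m : ℕ) (f : Finset ℕ → ℚ) (T : Finset ℕ) :
    opF (opE m f) T = (∑ u ∈ upSet T, ((u : ℚ) + 1) * (m - (u + 1))) * f T +
      ∑ u ∈ upSet T, ∑ t ∈ (downSet (shiftUp T u)).erase (u + 1),
        ((m : ℚ) - t) * ((u + 1) * f (shiftDown (shiftUp T u) t)) := by
  rw [opF_apply, sum_mul, ← sum_add_distrib]
  refine sum_congr rfl fun u hu => ?_
  rw [opE_apply, ← add_sum_erase _ _ add_one_mem_downSet_shiftUp, shiftDown_shiftUp hu,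
    mul_add, mul_sum]
  push_cast
  congr 1
  · ring
  · exact sum_congr rfl fun t _ => by ring

lemma opE_opF_sub_opF_opE_apply (m : ℕ) (f : Finset ℕ → ℚ) (T : Finset ℕ) :
    opE m (opF f) T - opF (opE m f) T = weight m T * f T := by
  -- Moves of two different elements commute, so only the diagonal terms survive.
  have hcross : ∑ t ∈ downSet T, ∑ u ∈ (upSet (shiftDown T t)).erase (t - 1),
        ((m : ℚ) - t) * ((u + 1) * f (shiftUp (shiftDown T t) u)) =
      ∑ u ∈ upSet T, ∑ t ∈ (downSet (shiftUp T u)).erase (u + 1),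
        ((m : ℚ) - t) * ((u + 1) * f (shiftDown (shiftUp T u) t)) := by
    rw [sum_comm' fun t u => mem_downSet_and_mem_upSet_shiftDown_iff.trans
      mem_downSet_shiftUp_and_mem_upSet_iff.symm]
    refine sum_congr rfl fun u hu => sum_congr rfl fun t ht => ?_
    obtain ⟨ht, hu, h, -⟩ := mem_downSet_shiftUp_and_mem_upSet_iff.1 ⟨ht, hu⟩
    rw [shiftUp_shiftDown_comm ht hu h]
  rw [opE_opF_apply, opF_opE_apply, hcross, ← sum_downSet_sub_sum_upSet]
  ring

attribute [local instance] LieRing.ofAssociativeRing LieAlgebra.ofAssociativeAlgebra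

open LieRing in
theorem isSl2Triple (m : ℕ) : IsSl2Triple (opH m) (opE m) opF where
  h_ne_zero h := by
    have := congr($h (Pi.single {m} 1) {m})
    simp only [opH_apply, weight, sum_singleton, Pi.single_eq_same, LinearMap.zero_apply,
      Pi.zero_apply] at this
    linarith
  lie_e_f := by
    ext f T
    simp [of_associative_ring_bracket, opE_opF_sub_opF_opE_apply, opH_apply]
  lie_h_e_nsmul := by
    ext f T
    simp only [of_associative_ring_bracket, LinearMap.sub_apply, Module.End.mul_apply,
      Pi.sub_apply, opH_apply, opE_apply, mul_sum, ← sum_sub_distrib, nsmul_eq_mul,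
      Nat.cast_ofNat, Module.End.ofNat_apply, Pi.smul_apply]
    refine sum_congr rfl fun t ht => ?_
    rw [weight_shiftDown m ht]
    ring
  lie_h_f_nsmul := by
    ext f T
    simp only [of_associative_ring_bracket, LinearMap.sub_apply, Module.End.mul_apply,
      Pi.sub_apply, opH_apply, opF_apply, mul_sum, ← sum_sub_distrib, nsmul_eq_mul,
      Nat.cast_ofNat, LinearMap.neg_apply, Module.End.ofNat_apply, Pi.neg_apply, Pi.mul_apply,
      Pi.ofNat_apply, ← sum_neg_distrib]
    refine sum_congr rfl fun u hu => ?_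
    rw [weight_shiftUp m hu]
    ring

lemma opF_pow_eq_zero {f : Finset ℕ → ℚ} {N : ℕ} (hf : ∀ T, f T ≠ 0 → ∑ t ∈ T, t < N) :
    (opF ^ N) f = 0 := by
  induction N generalizing f with
  | zero => exact funext fun T => not_not.1 fun hT => Nat.not_lt_zero _ (hf T hT)
  | succ N ih =>
    rw [pow_succ, Module.End.mul_apply]
    refine ih fun T hT => ?_
    rw [opF_apply] at hT
    obtain ⟨u, hu, hne⟩ := exists_ne_zero_of_sum_ne_zero hT
    have := hf _ (right_ne_zero_of_mul hne)
    rw [sum_shiftUp hu] at this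
    omega

lemma weight_of_mem_sumSubsets {m j s : ℕ} (hT : T ∈ sumSubsets m j s) :
    weight m T = 2 * s + j - j * m := by
  obtain ⟨-, rfl, rfl⟩ := mem_sumSubsets.1 hT
  simp only [weight, sum_sub_distrib, sum_add_distrib, ← mul_sum, sum_const, nsmul_eq_mul]
  push_cast
  ring

lemma shiftUp_mem_sumSubsets {m j s : ℕ} (hT : T ∈ sumSubsets m j s) (hu : u ∈ upSet T)
    (hum : u + 1 < m) : shiftUp T u ∈ sumSubsets m j (s + 1) := by
  obtain ⟨hTm, rfl, rfl⟩ := mem_sumSubsets.1 hT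
  refine mem_sumSubsets.2 ⟨?_, card_shiftUp hu, sum_shiftUp hu⟩
  rw [shiftUp, insert_subset_iff]
  exact ⟨mem_range.2 hum, (erase_subset _ _).trans hTm⟩

lemma eq_zero_of_opE_eq_zero {m j s : ℕ} (hjm : 2 * s + j < j * m) {v : Finset ℕ → ℚ}
    (hv : ∀ T, v T ≠ 0 → T ∈ sumSubsets m j s) (hE : opE m v = 0) : v = 0 := by
  by_contra hne
  have hH : opH m v = (2 * s + j - j * m : ℚ) • v := by
    ext T
    rw [opH_apply, Pi.smul_apply, smul_eq_mul]
    by_cases hT : v T = 0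
    · simp [hT]
    · rw [weight_of_mem_sumSubsets (hv T hT)]
  have hF : (opF ^ (s + 1)) v = 0 :=
    opF_pow_eq_zero fun T hT => by rw [(mem_sumSubsets.1 (hv T hT)).2.2]; omega
  have P : (isSl2Triple m).HasPrimitiveVectorWith v (2 * s + j - j * m : ℚ) :=
    ⟨hne, hH, hE⟩
  obtain ⟨n, hn⟩ := P.exists_nat_of_pow_toEnd_f_eq_zero (N := s + 1) (by simpa using hF)
  have : ((2 * s + j : ℕ) : ℚ) < ((j * m : ℕ) : ℚ) := by exact_mod_cast hjm
  push_cast at this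
  linarith [(n.cast_nonneg : (0 : ℚ) ≤ n)]

-- From outside `sumSubsets m j (s + 1)`, the only move down into `sumSubsets m j s` is that of
-- `t = m`, and its coefficient `m - t` vanishes.
lemma opE_apply_eq_zero_of_notMem {m j s : ℕ} {v : Finset ℕ → ℚ}
    (hv : ∀ T, v T ≠ 0 → T ∈ sumSubsets m j s) (hT : T ∉ sumSubsets m j (s + 1)) :
    opE m v T = 0 := by
  by_contra hE
  obtain ⟨t, ht, hne⟩ := exists_ne_zero_of_sum_ne_zero (opE_apply m v T ▸ hE)
  have hS := hv _ (right_ne_zero_of_mul hne)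
  have htm : t ≠ m := fun h => left_ne_zero_of_mul hne (by simp [h])
  have ht₁ := mem_range.1 <| (mem_sumSubsets.1 hS).1 (mem_insert_self (t - 1) _)
  have := sub_one_add_one_of_mem_downSet ht
  apply hT
  rw [← shiftUp_shiftDown ht]
  exact shiftUp_mem_sumSubsets hS (sub_one_mem_upSet_shiftDown ht) (by omega)

theorem card_sumSubsets_le_succ {m j s : ℕ} (hjm : 2 * s + j < j * m) :
    #(sumSubsets m j s) ≤ #(sumSubsets m j (s + 1)) := by
  set A := sumSubsets m j s
  set B := sumSubsets m j (s + 1)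
  let extend := Function.ExtendByZero.linearMap ℚ (Subtype.val : A → Finset ℕ)
  have hext (g : A → ℚ) (T : Finset ℕ) (hT : extend g T ≠ 0) : T ∈ A := by
    by_contra hTA
    exact hT (Function.extend_apply' _ _ _ fun ⟨a, ha⟩ => hTA (ha ▸ a.2))
  let Φ := LinearMap.funLeft ℚ ℚ (Subtype.val : B → Finset ℕ) ∘ₗ opE m ∘ₗ extend
  have hΦ : Function.Injective Φ := by
    rw [← LinearMap.ker_eq_bot, LinearMap.ker_eq_bot']
    intro g hg
    have hE : opE m (extend g) = 0 := by
      ext T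
      by_cases hT : T ∈ B
      · exact congr($hg ⟨T, hT⟩)
      · exact opE_apply_eq_zero_of_notMem (hext g) hT
    have := eq_zero_of_opE_eq_zero hjm (hext g) hE
    ext a
    simpa [extend, Subtype.val_injective.extend_apply] using congr_fun this a
  simpa using LinearMap.finrank_le_finrank_of_injective hΦ

end FinsetSl2

section BoxTuples

variable {j k n : ℕ}

def boxTuples (j k n : ℕ) : Set (Fin j → ℕ) := {b | Monotone b ∧ (∀ i, b i ≤ k) ∧ ∑ i, b i = n}

noncomputable def boxTuples.toPartition (b : boxTuples j k n) :
    {π : n.Partition // Multiset.card π.parts ≤ j ∧ ∀ i ∈ π.parts, i ≤ k} :=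
  ⟨.ofSums n (univ.val.map b) (by rw [← b.2.2.2]; rfl),
    by simpa using Multiset.card_le_card (Multiset.filter_le (· ≠ 0) (univ.val.map b.1)),
    by simpa using fun i _ => b.2.2.1 i⟩

lemma boxTuples.toPartition_injective :
    Function.Injective (boxTuples.toPartition (j := j) (k := k) (n := n)) := by
  rintro ⟨b, hb⟩ ⟨b', hb'⟩ h
  have := congrArg (fun π => π.1.parts) h
  simp only [boxTuples.toPartition, Nat.Partition.ofSums_parts] at this
  have := Multiset.eq_of_card_eq_of_filter_ne_zero_eq (by simp) this
  rw [Fin.univ_val_map, Fin.univ_val_map, Multiset.coe_eq_coe] at this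
  exact Subtype.ext (Monotone.eq_of_ofFn_perm hb.1 hb'.1 this)

lemma boxTuples.toPartition_surjective :
    Function.Surjective (boxTuples.toPartition (j := j) (k := k) (n := n)) := by
  rintro ⟨π, hj, hk⟩
  set s := π.parts + Multiset.replicate (j - Multiset.card π.parts) 0
  obtain ⟨b, hb, hbs⟩ := Multiset.exists_monotone_ofFn_eq (s := s) (j := j) (by simp [s]; omega)
  have hmem (i : Fin j) : b i ∈ s := by
    rw [← hbs, Multiset.mem_coe, List.mem_ofFn]
    exact ⟨i, rfl⟩
  have hbk (i : Fin j) : b i ≤ k := by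
    rcases Multiset.mem_add.1 (hmem i) with h | h
    · exact hk _ h
    · simp [Multiset.eq_of_mem_replicate h]
  have hbn : ∑ i, b i = n := by
    rw [← List.sum_ofFn, ← Multiset.sum_coe, hbs]
    simp [s, π.parts_sum]
  refine ⟨⟨b, hb, hbk, hbn⟩, Subtype.ext (Nat.Partition.ext ?_)⟩
  simp only [boxTuples.toPartition, Nat.Partition.ofSums_parts, Fin.univ_val_map, hbs, s,
    Multiset.filter_add]
  rw [Multiset.filter_eq_self.2 fun a ha => (π.parts_pos ha).ne',
    Multiset.filter_eq_nil.2 fun a ha => by simp [Multiset.eq_of_mem_replicate ha], add_zero]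

def boxTuples.toSumSubset (b : boxTuples j k n) : sumSubsets (j + k) j (n + ∑ i ∈ range j, i) :=
  ⟨univ.image fun i => b.1 i + i, mem_sumSubsets.2 ⟨fun x hx => by
    obtain ⟨i, -, rfl⟩ := mem_image.1 hx
    have := b.2.2.1 i
    simp only [mem_range]
    omega, by rw [card_image_of_injective _ b.2.1.strictMono_add_val.injective, card_fin], by
    rw [sum_image fun _ _ _ _ h => b.2.1.strictMono_add_val.injective h, sum_add_distrib, b.2.2.2,
      Fin.sum_univ_eq_sum_range (fun i => i)]⟩⟩

lemma boxTuples.toSumSubset_injective :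
    Function.Injective (boxTuples.toSumSubset (j := j) (k := k) (n := n)) := by
  intro b b' h
  have h := congrArg (fun T => ((T.1 : Finset ℕ) : Set ℕ)) h
  simp only [boxTuples.toSumSubset, coe_image, coe_univ, Set.image_univ] at h
  have := (b.2.1.strictMono_add_val.range_inj b'.2.1.strictMono_add_val).1 h
  exact Subtype.ext (funext fun i => by simpa using congrFun this i)

lemma boxTuples.toSumSubset_surjective :
    Function.Surjective (boxTuples.toSumSubset (j := j) (k := k) (n := n)) := by
  rintro ⟨T, hT⟩
  obtain ⟨hTm, hTj, hTs⟩ := mem_sumSubsets.1 hT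
  set c := T.orderEmbOfFin hTj
  have himage : univ.image (fun i => c i - i + i) = T := by
    simp_rw [Nat.sub_add_cancel (c.strictMono.val_le_apply _)]
    exact T.image_orderEmbOfFin_univ hTj
  have hbk (i : Fin j) : c i - i ≤ k := by
    have := i.pos
    have hlast := c.strictMono.monotone_sub_val (Fin.le_def.2 (by simp; omega) :
      i ≤ ⟨j - 1, by omega⟩)
    have : c ⟨j - 1, by omega⟩ < j + k := mem_range.1 (hTm (T.orderEmbOfFin_mem hTj _))
    simp only at hlast
    omega
  have hbn : ∑ i, (c i - i) = n := by
    have := congrArg (∑ t ∈ ·, t) himage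
    rw [sum_image fun _ _ _ _ h => c.strictMono.monotone_sub_val.strictMono_add_val.injective h,
      sum_add_distrib, Fin.sum_univ_eq_sum_range (fun i => i), hTs] at this
    omega
  exact ⟨⟨_, c.strictMono.monotone_sub_val, hbk, hbn⟩, Subtype.ext himage⟩

lemma boxPartitions_eq_card_sumSubsets (k j n : ℕ) :
    boxPartitions k j n = #(sumSubsets (j + k) j (n + ∑ i ∈ range j, i)) := by
  rw [boxPartitions, ← Nat.card_eq_of_bijective _
      ⟨boxTuples.toPartition_injective, boxTuples.toPartition_surjective⟩,
    Nat.card_eq_of_bijective _ ⟨boxTuples.toSumSubset_injective, boxTuples.toSumSubset_surjective⟩,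
    Nat.card_eq_finsetCard]

end BoxTuples

/-- Unimodality of the Gaussian binomial coefficients up to the middle:
`p(k, j, n-1) ≤ p(k, j, n)` for `n ≤ jk/2`. -/
theorem stmt_16 (j k n : ℕ) (hn : n ≤ j * k / 2) :
    boxPartitions k j (n - 1) ≤ boxPartitions k j n := by
  rcases Nat.eq_zero_or_pos n with rfl | hn₀
  · exact le_rfl
  have hsum : (∑ i ∈ range j, i) * 2 = j * (j - 1) := sum_range_id_mul_two j
  have hsq : j * (j - 1) + j = j * j := by cases j <;> simp [Nat.mul_succ]
  have hmid : 2 * (n - 1 + ∑ i ∈ range j, i) + j < j * (j + k) := by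
    rw [Nat.mul_add j j k]; omega
  have := FinsetSl2.card_sumSubsets_le_succ hmid
  rwa [show n - 1 + ∑ i ∈ range j, i + 1 = n + ∑ i ∈ range j, i by omega,
    ← boxPartitions_eq_card_sumSubsets, ← boxPartitions_eq_card_sumSubsets] at this
end
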